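/- arXiv:0803.0998 — 2 statements merged into one kernel-verified Lean document; each statement's English description precedes it below -/
import Mathlib

section
/- Let R be a commutative noetherian ring, C a semidualizing R-module, and M an R-module. The Pontryagin dual M* = Hom_ℤ(M, ℚ/ℤ) is C-injective if and only if M is C-flat. -/
open CategoryTheory TensorProduct

universe u

section
variable (R : Type u) [CommRing R]

def extZero (M N : ModuleCat.{u} R) : Prop :=
  ∀ i : ℕ, 1 ≤ i → Subsingleton (((Ext R (ModuleCat.{u} R) i).obj (Opposite.op M)).obj N)

def torZero (M N : ModuleCat.{u} R) : Prop :=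
  ∀ i : ℕ, 1 ≤ i → Subsingleton (((Tor (ModuleCat.{u} R) i).obj M).obj N)

def IsSemidualizing (C : ModuleCat.{u} R) : Prop :=
  Module.Finite R C ∧ Function.Bijective (LinearMap.lsmul R C) ∧ extZero R C C

/-- A module is `C`-flat if it is isomorphic to `F ⊗[R] C` with `F` flat. -/
def IsCFlat (C M : ModuleCat.{u} R) : Prop :=
  ∃ F : ModuleCat.{u} R, Module.Flat R F ∧ Nonempty (M ≃ₗ[R] (F ⊗[R] C))

def IsCInjective (C M : ModuleCat.{u} R) : Prop :=
  ∃ I : ModuleCat.{u} R, Module.Injective R I ∧ Nonempty (M ≃ₗ[R] (↥C →ₗ[R] ↥I))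

/-- cotorsion: `Ext^{≥1}(F, N) = 0` for all flat `F`. -/
def IsCotorsion (N : ModuleCat.{u} R) : Prop :=
  ∀ F : ModuleCat.{u} R, Module.Flat R F → extZero R F N

/-- `C`-cotorsion: `Ext^{≥1}(F ⊗ C, N) = 0` for all flat `F`. -/
def IsCCotorsion (C N : ModuleCat.{u} R) : Prop :=
  ∀ F : ModuleCat.{u} R, Module.Flat R F →
    extZero R (ModuleCat.of R (↥F ⊗[R] ↥C)) N

/-- `C`-flat `C`-cotorsion: isomorphic to `F ⊗ C` with `F` flat and cotorsion. -/
def IsCFlatCotorsion (C M : ModuleCat.{u} R) : Prop :=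
  ∃ F : ModuleCat.{u} R, Module.Flat R F ∧ IsCotorsion R F ∧
    Nonempty (M ≃ₗ[R] (F ⊗[R] C))

/-- The natural evaluation map `C ⊗ Hom(C,M) → M`. -/
noncomputable def evalMap (C M : ModuleCat.{u} R) :
    (↥C ⊗[R] (↥C →ₗ[R] ↥M)) →ₗ[R] ↥M :=
  TensorProduct.lift (LinearMap.id (R := R) (M := ↥C →ₗ[R] ↥M)).flip

/-- The Bass class `B_C(R)`. -/
noncomputable def InBassClass (C M : ModuleCat.{u} R) : Prop :=
  extZero R C M ∧
  torZero R C (ModuleCat.of R (↥C →ₗ[R] ↥M)) ∧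
  Function.Bijective (evalMap R C M)

/-- A `ℤ`-indexed complex of `R`-modules: `d i : X (i+1) → X i`. -/
structure ZComplex where
  X : ℤ → ModuleCat.{u} R
  d : ∀ i : ℤ, ↥(X (i + 1)) →ₗ[R] ↥(X i)
  d_comp_d : ∀ i : ℤ, (d i).comp (d (i + 1)) = 0

namespace ZComplex

variable {R} (Z : ZComplex R)

/-- Exactness of the complex. -/
def IsExact : Prop := ∀ i : ℤ, Function.Exact (Z.d (i + 1)) (Z.d i)

/-- Exactness of `Z ⊗[R] J`. -/
def TensorExact (J : ModuleCat.{u} R) : Prop :=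
  ∀ i : ℤ, Function.Exact (LinearMap.rTensor (↥J) (Z.d (i + 1)))
    (LinearMap.rTensor (↥J) (Z.d i))

/-- Exactness of `Hom_R(V, Z)`. -/
def HomFromExact (V : ModuleCat.{u} R) : Prop :=
  ∀ i : ℤ, Function.Exact
    (fun f : ↥V →ₗ[R] ↥(Z.X (i + 1 + 1)) => (Z.d (i + 1)).comp f)
    (fun f : ↥V →ₗ[R] ↥(Z.X (i + 1)) => (Z.d i).comp f)

/-- Exactness of `Hom_R(Z, V)`. -/
def HomToExact (V : ModuleCat.{u} R) : Prop :=
  ∀ i : ℤ, Function.Exact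
    (fun g : ↥(Z.X i) →ₗ[R] ↥V => g.comp (Z.d i))
    (fun g : ↥(Z.X (i + 1)) →ₗ[R] ↥V => g.comp (Z.d (i + 1)))

/-- `M ≅ Coker(∂₁)`. -/
def IsCokerOfD1 (M : ModuleCat.{u} R) : Prop :=
  Nonempty (↥M ≃ₗ[R] (↥(Z.X 0) ⧸ LinearMap.range (Z.d 0)))

end ZComplex

end

section
variable (R : Type u) [CommRing R]

/-- A complete `FF_C`-resolution witnessing that `M` is `G_C`-flat. -/
def IsGCFlat (C M : ModuleCat.{u} R) : Prop :=
  ∃ Z : ZComplex R, Z.IsExact ∧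
    (∀ i : ℤ, 0 ≤ i → Module.Flat R (Z.X i)) ∧
    (∀ i : ℤ, i < 0 → IsCFlat R C (Z.X i)) ∧
    (∀ J : ModuleCat.{u} R, IsCInjective R C J → Z.TensorExact J) ∧
    Z.IsCokerOfD1 M

def IsCProjective (C M : ModuleCat.{u} R) : Prop :=
  ∃ P : ModuleCat.{u} R, Module.Projective R P ∧ Nonempty (M ≃ₗ[R] (P ⊗[R] C))

/-- A complete `PP_C`-resolution witnessing that `M` is `G_C`-projective. -/
def IsGCProjective (C M : ModuleCat.{u} R) : Prop :=
  ∃ Z : ZComplex R, Z.IsExact ∧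
    (∀ i : ℤ, 0 ≤ i → Module.Projective R (Z.X i)) ∧
    (∀ i : ℤ, i < 0 → IsCProjective R C (Z.X i)) ∧
    (∀ Q : ModuleCat.{u} R, IsCProjective R C Q → Z.HomToExact Q) ∧
    Z.IsCokerOfD1 M

/-- `G(𝒳)` for a class `𝒳` of modules. -/
def GClass (𝒳 : ModuleCat.{u} R → Prop) (M : ModuleCat.{u} R) : Prop :=
  ∃ Z : ZComplex R, Z.IsExact ∧
    (∀ i : ℤ, 𝒳 (Z.X i)) ∧
    (∀ V : ModuleCat.{u} R, 𝒳 V → Z.HomFromExact V) ∧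
    (∀ V : ModuleCat.{u} R, 𝒳 V → Z.HomToExact V) ∧
    Z.IsCokerOfD1 M

/-- Iterates `G^n(𝒳)`, with `G^0(𝒳) = 𝒳`. -/
def GIter : ℕ → (ModuleCat.{u} R → Prop) → (ModuleCat.{u} R → Prop)
  | 0, 𝒳 => 𝒳
  | n + 1, 𝒳 => GClass R (GIter n 𝒳)

/-- `H_C(𝒳)`: modules with a `P_C F_C^cot`-complete `𝒳`-resolution. -/
def HClass (C : ModuleCat.{u} R) (𝒳 : ModuleCat.{u} R → Prop) (M : ModuleCat.{u} R) : Prop :=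
  ∃ Z : ZComplex R, Z.IsExact ∧
    (∀ i : ℤ, 𝒳 (Z.X i)) ∧
    (∀ P : ModuleCat.{u} R, Module.Projective R P →
      Z.HomFromExact (ModuleCat.of R (↥P ⊗[R] ↥C))) ∧
    (∀ N : ModuleCat.{u} R, IsCFlatCotorsion R C N → Z.HomToExact N) ∧
    Z.IsCokerOfD1 M

/-- Iterates `H_C^n(𝒳)`, with `H_C^0(𝒳) = 𝒳`. -/
def HIter (C : ModuleCat.{u} R) : ℕ → (ModuleCat.{u} R → Prop) → (ModuleCat.{u} R → Prop)
  | 0, 𝒳 => 𝒳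
  | n + 1, 𝒳 => HClass R C (HIter C n 𝒳)

/-- `M` admits a resolution `0 → X_n → ⋯ → X_0 → M → 0` with each `X_i` in `𝒳`. -/
def HasResOfLength (𝒳 : ModuleCat.{u} R → Prop) (n : ℕ) (M : ModuleCat.{u} R) : Prop :=
  ∃ (P : ℕ → ModuleCat.{u} R) (d : ∀ i : ℕ, ↥(P (i + 1)) →ₗ[R] ↥(P i))
    (ε : ↥(P 0) →ₗ[R] ↥M),
      Function.Surjective ε ∧ Function.Exact (d 0) ε ∧
      (∀ i : ℕ, Function.Exact (d (i + 1)) (d i)) ∧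
      (∀ i : ℕ, i ≤ n → 𝒳 (P i)) ∧
      (∀ i : ℕ, n < i → Subsingleton (P i))

/-- `M` admits a coresolution `0 → M → Y_0 → ⋯ → Y_n → 0` with each `Y_i` in `𝒳`. -/
def HasCoresOfLength (𝒳 : ModuleCat.{u} R → Prop) (n : ℕ) (M : ModuleCat.{u} R) : Prop :=
  ∃ (P : ℕ → ModuleCat.{u} R) (d : ∀ i : ℕ, ↥(P i) →ₗ[R] ↥(P (i + 1)))
    (η : ↥M →ₗ[R] ↥(P 0)),
      Function.Injective η ∧ Function.Exact η (d 0) ∧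
      (∀ i : ℕ, Function.Exact (d i) (d (i + 1))) ∧
      (∀ i : ℕ, i ≤ n → 𝒳 (P i)) ∧
      (∀ i : ℕ, n < i → Subsingleton (P i))

/-- `C` is a dualizing module: semidualizing of finite injective dimension. -/
def IsDualizing (C : ModuleCat.{u} R) : Prop :=
  IsSemidualizing R C ∧
  ∃ n : ℕ, HasCoresOfLength R (fun I => Module.Injective R ↥I) n C

end

/-!
If `M* ≅ Hom(C, I)` with `I` injective, take `F = Hom(C, M)`. For finitely presented `C` and
injective `I`, tensor evaluation `C ⊗ Hom(N, I) → Hom(Hom(C, N), I)` is an isomorphism. With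
`I = R*`, for which `Hom(W, R*) ≅ W*`, it gives `F* ≅ C ⊗ M* ≅ C ⊗ Hom(C, I)`; with `N = C`,
together with `Hom(C, C) = R`, it gives `C ⊗ Hom(C, I) ≅ I`. Hence `F*` is injective, so `F` is
flat, and the same isomorphisms identify the dual of the evaluation map `C ⊗ F → M` with an
isomorphism, so `M ≅ F ⊗ C`. Conversely `(F ⊗ C)* ≅ Hom(C, F*)` by adjunction, and `F*` is
injective when `F` is flat.
-/
section InjectiveHom

variable {R : Type u} [CommRing R] {A B D I : Type u} [AddCommGroup A] [Module R A]
  [AddCommGroup B] [Module R B] [AddCommGroup D] [Module R D] [AddCommGroup I] [Module R I]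
  [Module.Injective R I]

lemma Module.Injective.lcomp_surjective {u : A →ₗ[R] B} (hu : Function.Injective u) :
    Function.Surjective (LinearMap.lcomp R I u) := fun χ ↦
  have ⟨χ', hχ'⟩ := Module.Injective.extension_property R I A B u hu χ
  ⟨χ', hχ'⟩

lemma Module.Injective.exact_lcomp {u : A →ₗ[R] B} {v : B →ₗ[R] D} (huv : Function.Exact u v) :
    Function.Exact (LinearMap.lcomp R I v) (LinearMap.lcomp R I u) := by
  have hv : v = (LinearMap.range v).subtype ∘ₗ v.rangeRestrict := rfl
  have huv' : Function.Exact u v.rangeRestrict :=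
    ((LinearMap.range v).injective_subtype.comp_exact_iff_exact).mp (hv ▸ huv)
  have hlcomp : LinearMap.lcomp R I v =
      LinearMap.lcomp R I v.rangeRestrict ∘ₗ LinearMap.lcomp R I (LinearMap.range v).subtype :=
    rfl
  rw [hlcomp, (Module.Injective.lcomp_surjective
    (LinearMap.range v).injective_subtype).comp_exact_iff_exact]
  exact LinearMap.exact_lcomp_of_exact_of_surjective I huv' v.surjective_rangeRestrict

end InjectiveHom

section TensorEval

variable {R : Type u} [CommRing R] (X N I : Type u) [AddCommGroup X] [Module R X]
  [AddCommGroup N] [Module R N] [AddCommGroup I] [Module R I]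

noncomputable def tensorEval : X ⊗[R] (N →ₗ[R] I) →ₗ[R] (X →ₗ[R] N) →ₗ[R] I :=
  TensorProduct.lift ((LinearMap.llcomp R (X →ₗ[R] N) N I).flip ∘ₗ LinearMap.applyₗ)

variable {X N I}

@[simp]
lemma tensorEval_tmul (x : X) (φ : N →ₗ[R] I) (g : X →ₗ[R] N) :
    tensorEval X N I (x ⊗ₜ φ) g = φ (g x) := rfl

lemma tensorEval_comp_rTensor {X' : Type u} [AddCommGroup X'] [Module R X'] (f : X' →ₗ[R] X) :
    tensorEval X N I ∘ₗ f.rTensor (N →ₗ[R] I) =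
      LinearMap.lcomp R I (LinearMap.lcomp R N f) ∘ₗ tensorEval X' N I :=
  TensorProduct.ext' fun _ _ ↦ rfl

variable (X N I)

lemma tensorEval_bijective_of_pi (ι : Type) [Fintype ι] [DecidableEq ι] :
    Function.Bijective (tensorEval (R := R) (ι → R) N I) := by
  let toPi : (ι → R) ⊗[R] (N →ₗ[R] I) ≃ₗ[R] (ι → N →ₗ[R] I) :=
    TensorProduct.comm R _ _ ≪≫ₗ TensorProduct.piScalarRight R R _ ι
  let restrict : (((ι → R) →ₗ[R] N) →ₗ[R] I) ≃ₗ[R] ((ι → N) →ₗ[R] I) :=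
    (Module.piEquiv ι R N).symm.arrowCongr (LinearEquiv.refl R I)
  have h : restrict.toLinearMap ∘ₗ tensorEval (ι → R) N I =
      (toPi ≪≫ₗ LinearMap.lsum R (fun _ ↦ N) R).toLinearMap := by
    refine TensorProduct.ext' fun x φ ↦ LinearMap.ext fun v ↦ ?_
    simp [restrict, toPi, Module.piEquiv_apply_apply]
  refine (Function.Bijective.of_comp_iff' restrict.bijective _).mp ?_
  rw [← LinearEquiv.coe_coe, ← LinearMap.coe_comp, h]
  exact LinearEquiv.bijective _

/-- Both sides are right exact in `X` (the right-hand side because `I` is injective), so the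
five lemma reduces the claim to a finite presentation of `X`. -/
theorem tensorEval_bijective [Module.FinitePresentation R X] [Module.Injective R I] :
    Function.Bijective (tensorEval (R := R) X N I) := by
  obtain ⟨n, m, f, g, hf, hgf⟩ := Module.FinitePresentation.exists_fin' R X
  exact LinearMap.bijective_of_surjective_of_bijective_of_right_exact
    (f₁ := g.rTensor (N →ₗ[R] I)) (f₂ := f.rTensor (N →ₗ[R] I))
    (g₁ := LinearMap.lcomp R I (LinearMap.lcomp R N g))
    (g₂ := LinearMap.lcomp R I (LinearMap.lcomp R N f))
    (hc₁ := (tensorEval_comp_rTensor g).symm) (hc₂ := (tensorEval_comp_rTensor f).symm)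
    (hf₁ := rTensor_exact _ hgf hf)
    (hg₁ := Module.Injective.exact_lcomp (LinearMap.exact_lcomp_of_exact_of_surjective N hgf hf))
    (hi₁ := (tensorEval_bijective_of_pi N I _).2) (hi₂ := tensorEval_bijective_of_pi N I _)
    (hf₂ := LinearMap.rTensor_surjective _ hf)
    (hg₂ := Module.Injective.lcomp_surjective (LinearMap.lcomp_injective_of_surjective f hf))

end TensorEval

namespace CharacterModule

variable {R : Type u} [CommRing R]

instance injective_of_flat (F : Type u) [AddCommGroup F] [Module R F] [Module.Flat R F] :
    Module.Injective R (CharacterModule F) :=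
  Module.Flat.iff_characterModule_injective.mp ‹_›

variable (W : Type u) [AddCommGroup W] [Module R W]

noncomputable def homSelfEquiv : (W →ₗ[R] CharacterModule R) ≃ₗ[R] CharacterModule W :=
  homEquiv ≪≫ₗ congr (TensorProduct.rid R W)

@[simp]
lemma homSelfEquiv_apply (φ : W →ₗ[R] CharacterModule R) (w : W) :
    homSelfEquiv W φ w = φ w 1 := rfl

variable (X N : Type u) [AddCommGroup X] [Module R X] [AddCommGroup N] [Module R N]
  [Module.FinitePresentation R X]

noncomputable def tensorEvalEquiv :
    X ⊗[R] CharacterModule N ≃ₗ[R] CharacterModule (X →ₗ[R] N) :=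
  TensorProduct.congr (LinearEquiv.refl R X) (homSelfEquiv N).symm ≪≫ₗ
    LinearEquiv.ofBijective _ (tensorEval_bijective X N (CharacterModule R)) ≪≫ₗ
    homSelfEquiv _

@[simp]
lemma tensorEvalEquiv_tmul (x : X) (χ : CharacterModule N) (g : X →ₗ[R] N) :
    tensorEvalEquiv X N (x ⊗ₜ χ) g = χ (g x) := by
  simp only [tensorEvalEquiv, LinearEquiv.trans_apply, congr_tmul, LinearEquiv.refl_apply,
    LinearEquiv.ofBijective_apply, homSelfEquiv_apply, tensorEval_tmul]
  rw [← homSelfEquiv_apply, LinearEquiv.apply_symm_apply]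

end CharacterModule

section Semidualizing

variable {R : Type u} [CommRing R]

@[simp]
lemma evalMap_tmul (C M : ModuleCat.{u} R) (c : C) (g : C →ₗ[R] M) :
    evalMap R C M (c ⊗ₜ g) = g c := rfl

lemma evalMap_bijective_of_injective (C I : ModuleCat.{u} R) [Module.FinitePresentation R C]
    (hC : Function.Bijective (LinearMap.lsmul R C)) [Module.Injective R I] :
    Function.Bijective (evalMap R C I) := by
  let restrict : ((C →ₗ[R] C) →ₗ[R] I) ≃ₗ[R] (R →ₗ[R] I) :=
    (LinearEquiv.ofBijective _ hC).symm.arrowCongr (LinearEquiv.refl R I)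
  have h : evalMap R C I = (restrict ≪≫ₗ LinearMap.ringLmapEquivSelf R R I).toLinearMap ∘ₗ
      tensorEval C C I :=
    TensorProduct.ext' fun c φ ↦ by simp [restrict]
  rw [h, LinearMap.coe_comp]
  exact (LinearEquiv.bijective _).comp (tensorEval_bijective C C I)

end Semidualizing

section CharacterModuleOfCInjective

variable {R : Type u} [CommRing R] {C M I : ModuleCat.{u} R} [Module.FinitePresentation R C]
  [Module.Injective R I] (hC : Function.Bijective (LinearMap.lsmul R C))
  (e : CharacterModule M ≃ₗ[R] (C →ₗ[R] I))

include hC e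

noncomputable def characterModuleLinearMapEquiv : CharacterModule (C →ₗ[R] M) ≃ₗ[R] I :=
  (CharacterModule.tensorEvalEquiv C M).symm ≪≫ₗ TensorProduct.congr (LinearEquiv.refl R C) e ≪≫ₗ
    LinearEquiv.ofBijective _ (evalMap_bijective_of_injective C I hC)

lemma flat_linearMap_of_characterModule_equiv : Module.Flat R (C →ₗ[R] M) := by
  rw [Module.Flat.iff_characterModule_injective]
  exact Module.Injective.of_ringEquiv (RingEquiv.refl R)
    (characterModuleLinearMapEquiv hC e).symm

lemma evalMap_bijective_of_characterModule_equiv : Function.Bijective (evalMap R C M) := by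
  let Φ : CharacterModule (C ⊗[R] (C →ₗ[R] M)) ≃ₗ[R] (C →ₗ[R] I) :=
    CharacterModule.homEquiv.symm ≪≫ₗ
      LinearEquiv.congrRight (characterModuleLinearMapEquiv hC e)
  have hcurry (χ : CharacterModule M) (c : C) :
      CharacterModule.homEquiv.symm (CharacterModule.dual (evalMap R C M) χ) c =
        CharacterModule.tensorEvalEquiv C M (c ⊗ₜ χ) := by
    ext g
    rw [CharacterModule.tensorEvalEquiv_tmul]
    rfl
  have h : Φ.toLinearMap ∘ₗ CharacterModule.dual (evalMap R C M) = e.toLinearMap := by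
    refine LinearMap.ext fun χ ↦ LinearMap.ext fun c ↦ ?_
    simp only [Φ, characterModuleLinearMapEquiv, LinearMap.comp_apply, LinearEquiv.coe_coe,
      LinearEquiv.trans_apply, LinearEquiv.congrRight, LinearEquiv.arrowCongr_apply,
      LinearEquiv.refl_symm, LinearEquiv.refl_apply]
    rw [hcurry, LinearEquiv.symm_apply_apply]
    rfl
  refine CharacterModule.dual_bijective_iff_bijective.mp
    ((Function.Bijective.of_comp_iff' Φ.bijective _).mp ?_)
  rw [← LinearEquiv.coe_coe, ← LinearMap.coe_comp, h]
  exact e.bijective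

end CharacterModuleOfCInjective

/-- The Pontryagin dual `M*` is `C`-injective iff `M` is `C`-flat. -/
theorem stmt10 (R : Type u) [CommRing R] [IsNoetherianRing R]
    (C : ModuleCat.{u} R) (hC : IsSemidualizing R C) (M : ModuleCat.{u} R) :
    IsCInjective R C (ModuleCat.of R (CharacterModule ↥M)) ↔ IsCFlat R C M := by
  obtain ⟨hfin, hsmul, -⟩ := hC
  have := Module.finitePresentation_of_finite R C
  constructor
  · rintro ⟨I, hI, ⟨e⟩⟩
    refine ⟨ModuleCat.of R (C →ₗ[R] M), flat_linearMap_of_characterModule_equiv hsmul e, ⟨?_⟩⟩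
    exact (LinearEquiv.ofBijective _ (evalMap_bijective_of_characterModule_equiv hsmul e)).symm ≪≫ₗ
      TensorProduct.comm R _ _
  · rintro ⟨F, hF, ⟨e⟩⟩
    exact ⟨ModuleCat.of R (CharacterModule F), inferInstance,
      ⟨CharacterModule.congr (e ≪≫ₗ TensorProduct.comm R F C) ≪≫ₗ CharacterModule.homEquiv.symm⟩⟩
end

section
/- Let R be a commutative noetherian ring, C a semidualizing R-module, and M an R-module. If Tor_i^R(C,M) = 0 for all i ≥ 1, then the Pontryagin dual M* = Hom_ℤ(M, ℚ/ℤ) is C-cotorsion, i.e. Ext_R^i(F ⊗_R C, M*) = 0 for every flat R-module F and every i ≥ 1. -/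
open CategoryTheory TensorProduct

universe u

/-!
Computing `Ext` from a projective resolution `P` of `X = F ⊗ C`, adjunction gives
`Hom(P, M*) ≅ (P ⊗ M)*`, and `(-)*` is exact because `ℚ/ℤ` is an injective abelian group; so it
suffices that `P ⊗ M` is exact in positive degrees, i.e. that `Tor_{≥1}(X, M)` vanishes when
computed by resolving `X`. The hypothesis says that `C ⊗ Q` is exact for a projective resolution
`Q` of `M`, hence so is `F ⊗ C ⊗ Q` since `F` is flat. The two computations of `Tor` agree by the
usual balancing argument: dimension shifting along the syzygies of `M`, where the base case is the
symmetry of `Tor₁` and each shift is a diagram chase through `0 → N → Q₀ → M → 0`.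
-/

open CategoryTheory.Limits LinearMap
open Function (Exact Injective Surjective)

section

variable {R : Type*} [CommRing R]

theorem LinearMap.rTensor_lTensor_comm_apply {M N P Q : Type*} [AddCommGroup M] [AddCommGroup N]
    [AddCommGroup P] [AddCommGroup Q] [Module R M] [Module R N] [Module R P] [Module R Q]
    (f : M →ₗ[R] P) (g : N →ₗ[R] Q) (x : M ⊗[R] N) :
    rTensor Q f (lTensor M g x) = lTensor P g (rTensor N f x) := by
  rw [← LinearMap.comp_apply, rTensor_comp_lTensor, ← lTensor_comp_rTensor, LinearMap.comp_apply]

-- Symmetry of `Tor₁` for the flat presentations `0 → K → P → Y → 0` and `0 → N → Q → M → 0`.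
theorem injective_rTensor_of_injective_lTensor {K P Y N Q M : Type*}
    [AddCommGroup K] [AddCommGroup P] [AddCommGroup Y] [AddCommGroup N] [AddCommGroup Q]
    [AddCommGroup M] [Module R K] [Module R P] [Module R Y] [Module R N] [Module R Q]
    [Module R M] [Module.Flat R P] [Module.Flat R Q]
    {k : K →ₗ[R] P} {p : P →ₗ[R] Y} {n : N →ₗ[R] Q} {q : Q →ₗ[R] M}
    (hk : Injective k) (hkp : Exact k p) (hp : Surjective p)
    (hnq : Exact n q) (hq : Surjective q) (hY : Injective (lTensor Y n)) :
    Injective (rTensor M k) := by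
  rw [injective_iff_map_eq_zero]
  intro x hx
  obtain ⟨x, rfl⟩ := lTensor_surjective K hq x
  rw [rTensor_lTensor_comm_apply] at hx
  obtain ⟨y, hy⟩ := (lTensor_exact P hnq hq _).mp hx
  have hYn : lTensor Y n (rTensor N p y) = 0 := by
    rw [← rTensor_lTensor_comm_apply, hy, ← rTensor_comp_apply, hkp.linearMap_comp_eq_zero,
      rTensor_zero, LinearMap.zero_apply]
  obtain ⟨w, hw⟩ := (rTensor_exact N hkp hp y).mp ((injective_iff_map_eq_zero _).mp hY _ hYn)
  have hx : x = lTensor K n w := by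
    apply Module.Flat.rTensor_preserves_injective_linearMap k hk
    rw [rTensor_lTensor_comm_apply, hw, hy]
  rw [hx, ← lTensor_comp_apply, hnq.linearMap_comp_eq_zero, lTensor_zero, LinearMap.zero_apply]

-- Dimension shifting along `0 → N → Q → M → 0`: `P ⊗ M` is exact one degree above `P ⊗ N`.
theorem exact_rTensor_of_exact_rTensor_of_exact {P₃ P₂ P₁ P₀ N Q M : Type*}
    [AddCommGroup P₃] [AddCommGroup P₂] [AddCommGroup P₁] [AddCommGroup P₀]
    [AddCommGroup N] [AddCommGroup Q] [AddCommGroup M]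
    [Module R P₃] [Module R P₂] [Module R P₁] [Module R P₀]
    [Module R N] [Module R Q] [Module R M] [Module.Flat R P₀] [Module.Flat R Q]
    {d₂ : P₃ →ₗ[R] P₂} {d₁ : P₂ →ₗ[R] P₁} {d₀ : P₁ →ₗ[R] P₀}
    {n : N →ₗ[R] Q} {q : Q →ₗ[R] M}
    (hd₂ : Exact d₂ d₁) (hd₀ : d₀ ∘ₗ d₁ = 0)
    (hn : Injective n) (hnq : Exact n q) (hq : Surjective q)
    (hN : Exact (rTensor N d₁) (rTensor N d₀)) :
    Exact (rTensor M d₂) (rTensor M d₁) := by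
  refine exact_of_comp_eq_zero_of_ker_le_range
    (by rw [← rTensor_comp, hd₂.linearMap_comp_eq_zero, rTensor_zero]) fun x hx => ?_
  obtain ⟨y, rfl⟩ := lTensor_surjective P₂ hq x
  rw [mem_ker, rTensor_lTensor_comm_apply] at hx
  obtain ⟨z, hz⟩ := (lTensor_exact P₁ hnq hq _).mp hx
  have hz₀ : rTensor N d₀ z = 0 := by
    apply Module.Flat.lTensor_preserves_injective_linearMap n hn
    rw [map_zero, ← rTensor_lTensor_comm_apply, hz, ← rTensor_comp_apply, hd₀, rTensor_zero,
      LinearMap.zero_apply]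
  obtain ⟨w, hw⟩ := (hN z).mp hz₀
  have hy : rTensor Q d₁ (y - lTensor P₂ n w) = 0 := by
    rw [map_sub, rTensor_lTensor_comm_apply, hw, hz, sub_self]
  obtain ⟨v, hv⟩ := (Module.Flat.rTensor_exact Q hd₂ _).mp hy
  refine ⟨lTensor P₃ q v, ?_⟩
  rw [rTensor_lTensor_comm_apply, hv, map_sub, ← lTensor_comp_apply, hnq.linearMap_comp_eq_zero,
    lTensor_zero, LinearMap.zero_apply, sub_zero]

end

-- `⋯ → X 1 → X 0 → M → 0`, kept concrete so that passing to syzygies is a reindexing.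
structure FlatResolution (R : Type u) [CommRing R] (M : Type u) [AddCommGroup M] [Module R M] :
    Type (u + 1) where
  X : ℕ → Type u
  [addCommGroup : ∀ n, AddCommGroup (X n)]
  [module : ∀ n, Module R (X n)]
  [flat : ∀ n, Module.Flat R (X n)]
  d : ∀ n, X (n + 1) →ₗ[R] X n
  ε : X 0 →ₗ[R] M
  exact_d : ∀ n, Exact (d (n + 1)) (d n)
  exact_d_ε : Exact (d 0) ε
  surjective_ε : Surjective ε

attribute [instance] FlatResolution.addCommGroup FlatResolution.module FlatResolution.flat

namespace FlatResolution

variable {R : Type u} [CommRing R] {M : Type u} [AddCommGroup M] [Module R M]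
  (P : FlatResolution R M)

noncomputable def syzygy : FlatResolution R (range (P.d 0)) where
  X n := P.X (n + 1)
  d n := P.d (n + 1)
  ε := (P.d 0).rangeRestrict
  exact_d n := P.exact_d (n + 1)
  exact_d_ε := (Submodule.injective_subtype _).comp_exact_iff_exact.mp (P.exact_d 0)
  surjective_ε := (P.d 0).surjective_rangeRestrict

theorem exact_subtype_ε : Exact (range (P.d 0)).subtype P.ε := by
  rw [← P.exact_d_ε.linearMap_ker_eq]
  exact exact_subtype_ker_map P.ε

variable (N : Type u) [AddCommGroup N] [Module R N]

-- `Tor_{≥1}(N, M) = 0`, computed from the resolution `P` of `M`.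
def LTensorExact : Prop :=
  ∀ n, Exact (lTensor N (P.d (n + 1))) (lTensor N (P.d n))

variable {P N}

theorem LTensorExact.syzygy (h : P.LTensorExact N) : P.syzygy.LTensorExact N :=
  fun n => h (n + 1)

theorem LTensorExact.injective_lTensor_subtype (h : P.LTensorExact N) :
    Injective (lTensor N (range (P.d 0)).subtype) := by
  rw [injective_iff_map_eq_zero]
  intro x hx
  obtain ⟨y, rfl⟩ := lTensor_surjective N P.syzygy.surjective_ε x
  rw [← lTensor_comp_apply] at hx
  obtain ⟨z, rfl⟩ := (h 0 y).mp hx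
  exact (lTensor_exact N P.syzygy.exact_d_ε P.syzygy.surjective_ε).apply_apply_eq_zero z

theorem LTensorExact.tensor (F : Type u) [AddCommGroup F] [Module R F] [Module.Flat R F]
    (h : P.LTensorExact N) : P.LTensorExact (F ⊗[R] N) := fun n =>
  (Exact.iff_of_ladder_linearEquiv (e₁ := TensorProduct.assoc R F N _)
    (e₂ := TensorProduct.assoc R F N _) (e₃ := TensorProduct.assoc R F N _)
    (TensorProduct.ext_threefold fun _ _ _ => rfl)
    (TensorProduct.ext_threefold fun _ _ _ => rfl)).mp
    (Module.Flat.lTensor_exact F (h n))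

theorem exact_rTensor_of_lTensorExact {X : Type u} [AddCommGroup X] [Module R X]
    (P : FlatResolution R X) (k : ℕ) :
    ∀ {M : Type u} [AddCommGroup M] [Module R M] (Q : FlatResolution R M), Q.LTensorExact X →
      Exact (rTensor M (P.d (k + 1))) (rTensor M (P.d k)) := by
  induction k with
  | zero =>
    intro M _ _ Q hQ
    have hinj : Injective (rTensor M (range (P.d 0)).subtype) :=
      injective_rTensor_of_injective_lTensor (Submodule.injective_subtype _) P.exact_subtype_ε
        P.surjective_ε Q.exact_subtype_ε Q.surjective_ε hQ.injective_lTensor_subtype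
    rw [← (P.d 0).subtype_comp_codRestrict (range (P.d 0)) (P.d 0).mem_range_self, rTensor_comp,
      hinj.comp_exact_iff_exact]
    exact rTensor_exact M P.syzygy.exact_d_ε P.syzygy.surjective_ε
  | succ k ih =>
    intro M _ _ Q hQ
    exact exact_rTensor_of_exact_rTensor_of_exact (P.exact_d (k + 1))
      (P.exact_d k).linearMap_comp_eq_zero (Submodule.injective_subtype _) Q.exact_subtype_ε
      Q.surjective_ε (ih Q.syzygy hQ.syzygy)

noncomputable def ofProjectiveResolution {M : ModuleCat.{u} R} (P : ProjectiveResolution M) :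
    FlatResolution R M where
  X n := P.complex.X n
  flat n :=
    have : Module.Projective R (P.complex.X n) :=
      (IsProjective.iff_projective _).mpr (P.projective n)
    inferInstance
  d n := (P.complex.d (n + 1) n).hom
  ε := (P.π.f 0).hom
  exact_d n := (ShortComplex.ShortExact.moduleCat_exact_iff_function_exact _).mp (P.exact_succ n)
  exact_d_ε := (ShortComplex.ShortExact.moduleCat_exact_iff_function_exact _).mp P.exact₀
  surjective_ε := (ModuleCat.epi_iff_surjective _).mp inferInstance

theorem lTensorExact_of_torZero {C M : ModuleCat.{u} R} (Q : ProjectiveResolution M)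
    (hM : torZero R C M) : (ofProjectiveResolution Q).LTensorExact C := by
  intro n
  let T := (MonoidalCategory.tensoringLeft (ModuleCat.{u} R)).obj C
  have hT : IsZero ((T.leftDerived (n + 1)).obj M) :=
    ModuleCat.isZero_iff_subsingleton.mpr (hM (n + 1) n.succ_pos)
  have hexact := (HomologicalComplex.exactAt_iff_isZero_homology _ _).mpr
    (hT.of_iso (Q.isoLeftDerivedObj T (n + 1)).symm)
  rwa [HomologicalComplex.exactAt_iff' _ (n + 2) (n + 1) n (by simp) (by simp),
    ShortComplex.ShortExact.moduleCat_exact_iff_function_exact] at hexact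

end FlatResolution

namespace CharacterModule

variable {R : Type*} [CommRing R] {A B D : Type*} [AddCommGroup A] [AddCommGroup B]
  [AddCommGroup D] [Module R A] [Module R B] [Module R D]

theorem exact_dual {f : A →ₗ[R] B} {g : B →ₗ[R] D} (h : Exact f g) :
    Exact (dual g) (dual f) := by
  refine exact_of_comp_eq_zero_of_ker_le_range
    (by rw [← dual_comp, h.linearMap_comp_eq_zero, dual_zero]) fun c hc => ?_
  -- `c` kills `ker g = range f`, so it factors through `range g`, then extends to `D`.
  let π := g.rangeRestrict.toAddMonoidHom
  have hπ : Surjective π := g.surjective_rangeRestrict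
  have hker : π.ker ≤ c.ker := fun b hb => by
    obtain ⟨a, rfl⟩ := (h b).mp (Subtype.ext_iff.mp hb)
    exact congr($hc a)
  obtain ⟨e, he⟩ := dual_surjective_of_injective (range g).subtype (range g).injective_subtype
    (π.liftOfRightInverse _ (Function.rightInverse_surjInv hπ) ⟨c, hker⟩)
  exact ⟨e, DFunLike.ext _ _ fun b =>
    congr($he (π b)).trans (π.liftOfRightInverse_comp_apply _ _ ⟨c, hker⟩ b)⟩

theorem dual_rTensor_comp_homEquiv (M : Type*) [AddCommGroup M] [Module R M] (f : A →ₗ[R] B) :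
    dual (rTensor M f) ∘ₗ homEquiv.toLinearMap = homEquiv.toLinearMap ∘ₗ f.lcomp R _ := by
  rw [← dual_rTensor_conj_homEquiv]
  ext
  simp

theorem exact_lcomp_of_exact_rTensor {M : Type*} [AddCommGroup M] [Module R M]
    {f : A →ₗ[R] B} {g : B →ₗ[R] D} (h : Exact (rTensor M f) (rTensor M g)) :
    Exact (g.lcomp R (CharacterModule M)) (f.lcomp R (CharacterModule M)) :=
  (Exact.iff_of_ladder_linearEquiv (e₁ := homEquiv) (e₂ := homEquiv) (e₃ := homEquiv)
    (dual_rTensor_comp_homEquiv M g) (dual_rTensor_comp_homEquiv M f)).mp (exact_dual h)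

end CharacterModule

theorem extZero_characterModule_of_exact_rTensor {R : Type u} [CommRing R]
    {X M : ModuleCat.{u} R} (P : ProjectiveResolution X)
    (h : ∀ n, Exact (rTensor M (P.complex.d (n + 2) (n + 1)).hom)
      (rTensor M (P.complex.d (n + 1) n).hom)) :
    extZero R X (ModuleCat.of R (CharacterModule M)) := by
  intro i hi
  obtain ⟨n, rfl⟩ : ∃ n, i = n + 1 := ⟨i - 1, by omega⟩
  have hexact :
      (P.complex.linearYonedaObj R (ModuleCat.of R (CharacterModule M))).ExactAt (n + 1) := by
    rw [HomologicalComplex.exactAt_iff' _ n (n + 1) (n + 2) (by simp) (by simp),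
      ShortComplex.ShortExact.moduleCat_exact_iff_function_exact]
    exact (Exact.iff_of_ladder_linearEquiv (e₁ := ModuleCat.homLinearEquiv (S := R))
      (e₂ := ModuleCat.homLinearEquiv (S := R)) (e₃ := ModuleCat.homLinearEquiv (S := R))
      rfl rfl).mp (CharacterModule.exact_lcomp_of_exact_rTensor (h n))
  exact ModuleCat.subsingleton_of_isZero (hexact.isZero_homology.of_iso (P.isoExt (n + 1) _))

theorem stmt11_general (R : Type u) [CommRing R]
    (C : ModuleCat.{u} R) (M : ModuleCat.{u} R)
    (hM : torZero R C M) :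
    IsCCotorsion R C (ModuleCat.of R (CharacterModule ↥M)) := by
  intro F hF
  let P := FlatResolution.ofProjectiveResolution (projectiveResolution (ModuleCat.of R (F ⊗[R] C)))
  let Q := FlatResolution.ofProjectiveResolution (projectiveResolution M)
  have hQ : Q.LTensorExact (F ⊗[R] C) :=
    (FlatResolution.lTensorExact_of_torZero (projectiveResolution M) hM).tensor F
  exact extZero_characterModule_of_exact_rTensor _ fun n => P.exact_rTensor_of_lTensorExact n Q hQ

/-- If `Tor_i^R(C,M) = 0` for all `i ≥ 1`, then the Pontryagin dual
`M*` is `C`-cotorsion. -/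
theorem stmt11 (R : Type u) [CommRing R] [IsNoetherianRing R]
    (C : ModuleCat.{u} R) (hC : IsSemidualizing R C) (M : ModuleCat.{u} R)
    (hM : torZero R C M) :
    IsCCotorsion R C (ModuleCat.of R (CharacterModule ↥M)) :=
  stmt11_general R C M hM
end
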